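/- Let $(D, \Sigma)$ be a measurable space, $\nu$ a finite measure on $D$, and $F : D \to [0, \infty)$ a bounded measurable function. For each $\epsilon \in (0,1]$ let $g(\epsilon) > 0$, let $m_{\epsilon}$ be a finite measure on $D$, and let $p_{\epsilon} : D \to [0,1]$ be measurable. Suppose that as $\epsilon \to 0$: (i) $g(\epsilon) m_{\epsilon}(B) \to \nu(B)$ for every $B \in \Sigma$; (ii) $\sup_{x \in D} |p_{\epsilon}(x)/g(\epsilon) - F(x)| \to 0$; and (iii) $\sup_{\epsilon \in (0,1]} g(\epsilon) m_{\epsilon}(D) < \infty$. Then $\int_D p_{\epsilon} \, dm_{\epsilon} \to \int_D F \, d\nu$ as $\epsilon \to 0$; consequently, if for each $\epsilon$ the random variable $\eta_{\epsilon}$ has Poisson distribution with parameter $\int_D p_{\epsilon} \, dm_{\epsilon}$, then $\eta_{\epsilon}$ converges in distribution to the Poisson distribution with parameter $a = \int_D F \, d\nu$. -/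

import Mathlib

/-!
Writing `ν_ε := g ε • m_ε`, hypothesis (i) says `ν_ε → ν` setwise. By the layer-cake formula
`∫ F dν_ε = ∫₀^∞ ν_ε {F > t} dt`, and the integrands `t ↦ ν_ε {F > t}` converge pointwise and are
dominated by `sup_ε ν_ε(D) · 1_{(0, sup F]}` thanks to (iii), so `g ε ∫ F dm_ε → ∫ F dν`.
Uniform convergence (ii) gives `|∫ p_ε dm_ε - g ε ∫ F dm_ε| ≤ δ · g ε m_ε(D)`, which tends to `0`
by (iii) again. The Poisson masses `a ↦ aʲ e⁻ᵃ / j!` are continuous in the parameter.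
-/

open MeasureTheory Filter Topology Set

section SetwiseConvergence

variable {ι D : Type*} [MeasurableSpace D] {l : Filter ι} {μ : ι → Measure D} {c : ι → ℝ}

theorem tendsto_mul_integral_of_tendsto_mul_measure [l.IsCountablyGenerated] {ν : Measure D}
    [IsFiniteMeasure ν] {F : D → ℝ} (hμ : ∀ᶠ i in l, IsFiniteMeasure (μ i))
    (hc : ∀ᶠ i in l, 0 ≤ c i) (hmass : ∃ C, ∀ᶠ i in l, c i * (μ i univ).toReal ≤ C)
    (hset : ∀ B, MeasurableSet B → Tendsto (fun i => c i * (μ i B).toReal) l (𝓝 (ν B).toReal))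
    (hFm : Measurable F) (hF0 : ∀ x, 0 ≤ F x) (hFb : ∃ C, ∀ x, F x ≤ C) :
    Tendsto (fun i => c i * ∫ x, F x ∂μ i) l (𝓝 (∫ x, F x ∂ν)) := by
  obtain ⟨C, hC⟩ := hmass
  obtain ⟨K, hK⟩ := hFb
  have layer_cake : ∀ (ρ : Measure D) [IsFiniteMeasure ρ],
      ∫ x, F x ∂ρ = ∫ t in Ioi 0, (ρ {x | t < F x}).toReal := fun ρ _ =>
    (Integrable.of_bound hFm.aestronglyMeasurable K <| .of_forall fun x => by
      rw [Real.norm_of_nonneg (hF0 x)]; exact hK x).integral_eq_integral_meas_lt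
      (.of_forall hF0)
  have hlevel_empty : ∀ t, K ≤ t → {x | t < F x} = ∅ := fun t ht =>
    eq_empty_of_forall_notMem fun x hx => (hx.trans_le (hK x)).not_ge ht
  rw [layer_cake ν]
  refine (tendsto_integral_filter_of_dominated_convergence ((Ioc 0 K).indicator fun _ => C)
    ?_ ?_ ?_ (.of_forall fun t => hset {x | t < F x} (hFm measurableSet_Ioi))).congr' ?_
  · refine .of_forall fun i => (measurable_const.mul ?_).aestronglyMeasurable
    exact ENNReal.measurable_toReal.comp
      (Antitone.measurable fun s t hst => measure_mono fun x hx => hst.trans_lt hx)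
  · filter_upwards [hμ, hc, hC] with i _ hci hCi
    refine (ae_restrict_iff' measurableSet_Ioi).2 (.of_forall fun t ht => ?_)
    have hlevel_le : c i * (μ i {x | t < F x}).toReal ≤ C :=
      (mul_le_mul_of_nonneg_left (measureReal_mono (subset_univ _)) hci).trans hCi
    rcases le_or_gt t K with htK | hKt
    · rw [indicator_of_mem (show t ∈ Ioc 0 K from ⟨ht, htK⟩), Real.norm_of_nonneg (by positivity)]
      exact hlevel_le
    · rw [indicator_of_notMem fun h => hKt.not_ge h.2, hlevel_empty t hKt.le]
      simp
  · exact (integrableOn_const measure_Ioc_lt_top.ne).integrable_indicator measurableSet_Ioc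
      |>.restrict
  · filter_upwards [hμ] with i _
    rw [layer_cake (μ i), integral_const_mul]

theorem norm_integral_sub_mul_integral_le {ρ : Measure D} [IsFiniteMeasure ρ] {p F : D → ℝ}
    {a δ : ℝ} (ha : 0 < a) (hp : Integrable p ρ) (hF : Integrable F ρ)
    (hδ : ∀ x, |p x / a - F x| ≤ δ) :
    ‖(∫ x, p x ∂ρ) - a * ∫ x, F x ∂ρ‖ ≤ δ * (a * (ρ univ).toReal) := by
  rw [← integral_const_mul, ← integral_sub hp (hF.const_mul a)]
  calc ‖∫ x, (p x - a * F x) ∂ρ‖ ≤ a * δ * ρ.real univ := by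
        refine norm_integral_le_of_norm_le_const (.of_forall fun x => ?_)
        have hfactor : p x - a * F x = a * (p x / a - F x) := by field_simp
        rw [hfactor, norm_mul, Real.norm_of_nonneg ha.le, Real.norm_eq_abs]
        exact mul_le_mul_of_nonneg_left (hδ x) ha.le
    _ = δ * (a * (ρ univ).toReal) := by rw [measureReal_def]; ring

theorem tendsto_integral_sub_mul_integral_of_tendstoUniformly {p : ι → D → ℝ} {F : D → ℝ}
    (hμ : ∀ᶠ i in l, IsFiniteMeasure (μ i)) (hc : ∀ᶠ i in l, 0 < c i)
    (hmass : ∃ C, ∀ᶠ i in l, c i * (μ i univ).toReal ≤ C)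
    (hp : ∀ᶠ i in l, Integrable (p i) (μ i)) (hF : ∀ᶠ i in l, Integrable F (μ i))
    (hunif : TendstoUniformly (fun i x => p i x / c i) F l) :
    Tendsto (fun i => (∫ x, p i x ∂μ i) - c i * ∫ x, F x ∂μ i) l (𝓝 0) := by
  obtain ⟨C, hC⟩ := hmass
  rw [Metric.tendsto_nhds]
  intro ε hε
  have hδ : 0 < ε / (|C| + 1) := by positivity
  filter_upwards [hμ, hc, hC, hp, hF, Metric.tendstoUniformly_iff.1 hunif _ hδ]
    with i _ hci hCi hpi hFi hclose
  rw [dist_zero_right]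
  calc _ ≤ ε / (|C| + 1) * (c i * (μ i univ).toReal) :=
        norm_integral_sub_mul_integral_le hci hpi hFi fun x => by
          rw [abs_sub_comm]; exact (hclose x).le
    _ ≤ ε / (|C| + 1) * |C| := by gcongr; exact hCi.trans (le_abs_self C)
    _ < ε := by
        rw [div_mul_eq_mul_div, div_lt_iff₀ (by positivity)]
        nlinarith

end SetwiseConvergence

/-- the analytic core of the paper's Theorem 4.  On a measurable space `D` with
finite measure `ν` and bounded measurable `F ≥ 0`, suppose that as `ε → 0⁺`:
(i) `g ε · m_ε(B) → ν(B)` for every measurable `B`; (ii) `p_ε/g ε → F` uniformly on `D`;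
(iii) `g ε · m_ε(D)` is bounded uniformly in `ε ∈ (0,1]`.  Then
`∫_D p_ε dm_ε → ∫_D F dν`, and consequently, if for each `ε` the random variable `η_ε`
(encoded via its law `η ε` on `ℕ`) is Poisson with parameter `∫_D p_ε dm_ε`, then `η_ε`
converges in distribution to the Poisson law with parameter `a = ∫_D F dν`, i.e.
`P(η_ε = j) → a^j e^{-a}/j!` for every `j`. -/
theorem rarefaction_poisson_limit_random
    (D : Type) [MeasurableSpace D]
    (ν : Measure D) [IsFiniteMeasure ν]
    (F : D → ℝ) (hFmeas : Measurable F) (hFnn : ∀ x, 0 ≤ F x)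
    (hFbdd : ∃ Cb : ℝ, ∀ x, F x ≤ Cb)
    (g : ℝ → ℝ) (hgpos : ∀ ε ∈ Set.Ioc (0 : ℝ) 1, 0 < g ε)
    (m : ℝ → Measure D) (hm : ∀ ε ∈ Set.Ioc (0 : ℝ) 1, IsFiniteMeasure (m ε))
    (p : ℝ → D → ℝ) (hpmeas : ∀ ε ∈ Set.Ioc (0 : ℝ) 1, Measurable (p ε))
    (hp01 : ∀ ε ∈ Set.Ioc (0 : ℝ) 1, ∀ x, p ε x ∈ Set.Icc (0 : ℝ) 1)
    (hsetwise : ∀ B : Set D, MeasurableSet B →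
      Tendsto (fun ε => g ε * (m ε B).toReal) (𝓝[>] (0 : ℝ)) (𝓝 (ν B).toReal))
    (hpunif : ∀ δ > (0 : ℝ), ∀ᶠ ε in 𝓝[>] (0 : ℝ), ∀ x, |p ε x / g ε - F x| ≤ δ)
    (hbdd : ∃ Cm : ℝ, ∀ ε ∈ Set.Ioc (0 : ℝ) 1, g ε * (m ε Set.univ).toReal ≤ Cm) :
    Tendsto (fun ε => ∫ x, p ε x ∂(m ε)) (𝓝[>] (0 : ℝ)) (𝓝 (∫ x, F x ∂ν)) ∧
    ∀ η : ℝ → Measure ℕ,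
      (∀ ε ∈ Set.Ioc (0 : ℝ) 1, ∀ j : ℕ,
        η ε {j} = ENNReal.ofReal ((∫ x, p ε x ∂(m ε)) ^ j / (Nat.factorial j)
          * Real.exp (-∫ x, p ε x ∂(m ε)))) →
      ∀ j : ℕ, Tendsto (fun ε => (η ε {j}).toReal) (𝓝[>] (0 : ℝ))
        (𝓝 ((∫ x, F x ∂ν) ^ j / (Nat.factorial j) * Real.exp (-∫ x, F x ∂ν))) := by
  have hIoc : ∀ᶠ ε in 𝓝[>] (0 : ℝ), ε ∈ Ioc (0 : ℝ) 1 :=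
    Ioc_mem_nhdsGT zero_lt_one
  have hmfin := hIoc.mono hm
  have hmass : ∃ C, ∀ᶠ ε in 𝓝[>] (0 : ℝ), g ε * (m ε univ).toReal ≤ C :=
    hbdd.imp fun _ hCm => hIoc.mono hCm
  obtain ⟨Cb, hCb⟩ := hFbdd
  have hFint : ∀ᶠ ε in 𝓝[>] (0 : ℝ), Integrable F (m ε) := hmfin.mono fun ε _ =>
    .of_bound hFmeas.aestronglyMeasurable Cb <| .of_forall fun x => by
      rw [Real.norm_of_nonneg (hFnn x)]; exact hCb x
  have hpint : ∀ᶠ ε in 𝓝[>] (0 : ℝ), Integrable (p ε) (m ε) := hIoc.mono fun ε hε =>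
    have := hm ε hε
    .of_bound (hpmeas ε hε).aestronglyMeasurable 1 <| .of_forall fun x => by
      rw [Real.norm_of_nonneg (hp01 ε hε x).1]; exact (hp01 ε hε x).2
  have hunif : TendstoUniformly (fun ε x => p ε x / g ε) F (𝓝[>] 0) :=
    Metric.tendstoUniformly_iff.2 fun δ hδ => (hpunif (δ / 2) (half_pos hδ)).mono
      fun ε hε x => by rw [dist_comm, Real.dist_eq]; linarith [hε x]
  have hlim : Tendsto (fun ε => ∫ x, p ε x ∂m ε) (𝓝[>] 0) (𝓝 (∫ x, F x ∂ν)) := by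
    simpa using (tendsto_integral_sub_mul_integral_of_tendstoUniformly hmfin
      (hIoc.mono hgpos) hmass hpint hFint hunif).add
      (tendsto_mul_integral_of_tendsto_mul_measure hmfin (hIoc.mono fun ε hε => (hgpos ε hε).le)
        hmass hsetwise hFmeas hFnn ⟨Cb, hCb⟩)
  refine ⟨hlim, fun η hη j => ?_⟩
  have hpoisson : Continuous fun a : ℝ => a ^ j / j.factorial * Real.exp (-a) := by fun_prop
  refine ((hpoisson.tendsto _).comp hlim).congr' ?_
  filter_upwards [hIoc] with ε hε
  have hmean : 0 ≤ ∫ x, p ε x ∂m ε := integral_nonneg fun x => (hp01 ε hε x).1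
  rw [hη ε hε j, ENNReal.toReal_ofReal (by positivity)]
  rfl
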